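/- Let σ : ℝ → [0,1] be nondecreasing, let M be a positive integer, and let −∞ = c_0 < c_1 < … < c_{M−1} < c_M = +∞ determine intervals I_1 = (−∞, c_1], I_l = (c_{l−1}, c_l] for 1 < l < M, and I_M = (c_{M−1}, +∞). Let s_1 = 0 and s_l = σ(c_{l−1}) for l = 2,…,M, and assume that s_l ≤ σ(ξ) ≤ s_l + 1/M for all ξ ∈ I_l and all l. Then for every μ̄ ∈ ℝ, Σ̄ > 0 and every choice of μ_l ∈ ℝ, Σ_l > 0 (l = 1,…,M): | ∫_ℝ σ(ξ) N(ξ|μ̄,Σ̄) dξ − Σ_{l=1}^{M} s_l ∫_{I_l} N(ξ|μ_l,Σ_l) dξ | ≤ 1/M + Σ_{l=1}^{M} ∫_{I_l} | N(ξ|μ̄,Σ̄) − N(ξ|μ_l,Σ_l) | dξ. -/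

import Mathlib

open MeasureTheory Real Set Finset

/-- One-dimensional Gaussian density `N(ξ|μ,v) = (2πv)^{-1/2} exp(−(ξ−μ)²/(2v))`. -/
noncomputable def gaussPDF (μ v ξ : ℝ) : ℝ :=
  (Real.sqrt (2 * Real.pi * v))⁻¹ * Real.exp (-((ξ - μ) ^ 2) / (2 * v))

/-- The `l`-th discretisation interval of the latent space determined by the cut points
`c : ℕ → ℝ` (with `c_0 = −∞` and `c_M = +∞` interpreted implicitly):
`I_1 = (−∞, c_1]`, `I_l = (c_{l−1}, c_l]` for `1 < l < M`, and `I_M = (c_{M−1}, +∞)`. -/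
def latentInterval (M : ℕ) (c : ℕ → ℝ) (l : ℕ) : Set ℝ :=
  {ξ : ℝ | (1 < l → c (l - 1) < ξ) ∧ (l < M → ξ ≤ c l)}

/-!
Split both integrals along the partition `I_1, …, I_M` of `ℝ`. On `I_l` write
`σ N̄ - s_l N_l = (σ - s_l) N̄ + s_l (N̄ - N_l)`: the first term lies between `0` and `N̄ / M`,
and these bounds sum to `1/M` because `N̄` is a probability density; the second is at most
`|N̄ - N_l|` in absolute value because `0 ≤ s_l ≤ 1`.
-/

lemma gaussPDF_eq_gaussianPDFReal (μ v : ℝ) :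
    gaussPDF μ v = ProbabilityTheory.gaussianPDFReal μ v.toNNReal := by
  rcases le_or_gt v 0 with hv | hv
  · ext ξ
    have hsqrt : √(2 * π * v) = 0 := Real.sqrt_eq_zero_of_nonpos (by nlinarith [pi_pos])
    simp [gaussPDF, ProbabilityTheory.gaussianPDFReal_zero_var, Real.toNNReal_of_nonpos hv, hsqrt]
  · rw [Real.toNNReal_of_nonneg hv.le]
    rfl

lemma gaussPDF_nonneg (μ v ξ : ℝ) : 0 ≤ gaussPDF μ v ξ := by
  unfold gaussPDF
  positivity

lemma integrable_gaussPDF (μ v : ℝ) : Integrable (gaussPDF μ v) := by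
  rw [gaussPDF_eq_gaussianPDFReal]
  exact ProbabilityTheory.integrable_gaussianPDFReal _ _

lemma integral_gaussPDF (μ : ℝ) {v : ℝ} (hv : 0 < v) : ∫ ξ, gaussPDF μ v ξ = 1 := by
  rw [gaussPDF_eq_gaussianPDFReal]
  exact ProbabilityTheory.integral_gaussianPDFReal_eq_one μ (by simpa using hv)

section Partition

variable {α ι : Type*} [MeasurableSpace α] {μ : Measure α}

lemma integral_eq_sum_setIntegral_of_iUnion_eq_univ {t : Finset ι} {I : ι → Set α}
    (hI : ∀ i ∈ t, MeasurableSet (I i)) (hdisj : (t : Set ι).PairwiseDisjoint I)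
    (hcover : ⋃ i ∈ t, I i = univ) {f : α → ℝ} (hf : Integrable f μ) :
    ∫ x, f x ∂μ = ∑ i ∈ t, ∫ x in I i, f x ∂μ := by
  rw [← setIntegral_univ, ← hcover, integral_biUnion_finset t hI hdisj fun i _ => hf.integrableOn]

lemma abs_setIntegral_mul_sub_const_mul_le {A : Set α} (hA : MeasurableSet A)
    {σ f g : α → ℝ} {s δ : ℝ} (hσf : IntegrableOn (fun x => σ x * f x) A μ)
    (hf : IntegrableOn f A μ) (hg : IntegrableOn g A μ) (hf0 : ∀ x ∈ A, 0 ≤ f x)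
    (hband : ∀ x ∈ A, s ≤ σ x ∧ σ x ≤ s + δ) (hs : s ∈ Set.Icc (0 : ℝ) 1) :
    |(∫ x in A, σ x * f x ∂μ) - s * ∫ x in A, g x ∂μ|
      ≤ δ * (∫ x in A, f x ∂μ) + ∫ x in A, |f x - g x| ∂μ := by
  have hsplit : (∫ x in A, σ x * f x ∂μ) - s * ∫ x in A, g x ∂μ
      = (∫ x in A, (σ x - s) * f x ∂μ) + s * ∫ x in A, (f x - g x) ∂μ := by
    simp only [sub_mul]
    rw [integral_sub hσf (hf.const_mul s), integral_sub hf hg, integral_const_mul]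
    ring
  have hlevel : |∫ x in A, (σ x - s) * f x ∂μ| ≤ δ * ∫ x in A, f x ∂μ := by
    rw [← integral_const_mul, ← Real.norm_eq_abs]
    refine norm_integral_le_of_norm_le (hf.const_mul δ) (ae_restrict_of_forall_mem hA ?_)
    intro x hx
    obtain ⟨hlow, hhigh⟩ := hband x hx
    rw [Real.norm_eq_abs, abs_mul, abs_of_nonneg (sub_nonneg.2 hlow), abs_of_nonneg (hf0 x hx)]
    exact mul_le_mul_of_nonneg_right (by linarith) (hf0 x hx)
  have hdensity : |s * ∫ x in A, (f x - g x) ∂μ| ≤ ∫ x in A, |f x - g x| ∂μ := by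
    rw [abs_mul, abs_of_nonneg hs.1]
    exact (mul_le_of_le_one_left (abs_nonneg _) hs.2).trans abs_integral_le_integral_abs
  rw [hsplit]
  exact (abs_add_le _ _).trans (add_le_add hlevel hdensity)

lemma abs_integral_mul_sub_sum_le {t : Finset ι} {I : ι → Set α}
    (hI : ∀ i ∈ t, MeasurableSet (I i)) (hdisj : (t : Set ι).PairwiseDisjoint I)
    (hcover : ⋃ i ∈ t, I i = univ) {σ f : α → ℝ} {g : ι → α → ℝ} {s : ι → ℝ} {δ : ℝ}
    (hσf : Integrable (fun x => σ x * f x) μ) (hf : Integrable f μ)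
    (hg : ∀ i ∈ t, IntegrableOn (g i) (I i) μ) (hf0 : ∀ x, 0 ≤ f x)
    (hband : ∀ i ∈ t, ∀ x ∈ I i, s i ≤ σ x ∧ σ x ≤ s i + δ)
    (hs : ∀ i ∈ t, s i ∈ Set.Icc (0 : ℝ) 1) :
    |(∫ x, σ x * f x ∂μ) - ∑ i ∈ t, s i * ∫ x in I i, g i x ∂μ|
      ≤ δ * (∫ x, f x ∂μ) + ∑ i ∈ t, ∫ x in I i, |f x - g i x| ∂μ := by
  rw [integral_eq_sum_setIntegral_of_iUnion_eq_univ hI hdisj hcover hσf,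
    integral_eq_sum_setIntegral_of_iUnion_eq_univ hI hdisj hcover hf, mul_sum,
    ← sum_sub_distrib, ← sum_add_distrib]
  refine (abs_sum_le_sum_abs _ _).trans (sum_le_sum fun i hi => ?_)
  exact abs_setIntegral_mul_sub_const_mul_le (hI i hi) hσf.integrableOn hf.integrableOn (hg i hi)
    (fun x _ => hf0 x) (hband i hi) (hs i hi)

end Partition

section LatentInterval

variable {M : ℕ} {c : ℕ → ℝ}

lemma measurableSet_latentInterval (l : ℕ) : MeasurableSet (latentInterval M c l) :=
  ((MeasurableSet.const _).imp measurableSet_Ioi).inter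
    ((MeasurableSet.const _).imp measurableSet_Iic)

/-- `ξ` lies in `I_l` for the least `l ≥ 1` with `l = M` or `ξ ≤ c l`. -/
lemma iUnion_latentInterval (hM : 0 < M) : ⋃ l ∈ Finset.Icc 1 M, latentInterval M c l = univ := by
  refine eq_univ_of_forall fun ξ => ?_
  have hex : ∃ k, M ≤ k + 1 ∨ ξ ≤ c (k + 1) := ⟨M - 1, Or.inl (by omega)⟩
  classical
  set k := Nat.find hex
  have hk : M ≤ k + 1 ∨ ξ ≤ c (k + 1) := Nat.find_spec hex
  have hkM : k ≤ M - 1 := Nat.find_min' hex (Or.inl (by omega))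
  refine mem_biUnion (x := k + 1) (Finset.mem_Icc.2 ⟨by omega, by omega⟩)
    ⟨fun hl1 => ?_, fun hlM => ?_⟩
  · have hprev := Nat.find_min hex (show k - 1 < k by omega)
    push Not at hprev
    simpa [show k - 1 + 1 = k by omega] using hprev.2
  · exact hk.resolve_left (by omega)

lemma pairwiseDisjoint_latentInterval (hc : StrictMonoOn c (Set.Icc 1 (M - 1))) :
    ((Finset.Icc 1 M) : Set ℕ).PairwiseDisjoint (latentInterval M c) := by
  have hlt : ∀ a ∈ Finset.Icc 1 M, ∀ b ∈ Finset.Icc 1 M, a < b →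
      Disjoint (latentInterval M c a) (latentInterval M c b) := by
    intro a ha b hb hab
    rw [Finset.mem_Icc] at ha hb
    refine Set.disjoint_left.2 fun ξ hξa hξb => ?_
    have hmono : c a ≤ c (b - 1) :=
      hc.monotoneOn ⟨ha.1, by omega⟩ ⟨by omega, by omega⟩ (by omega)
    linarith [hξa.2 (by omega), hξb.1 (by omega)]
  intro a ha b hb hab
  rcases hab.lt_or_gt with h | h
  · exact hlt a ha b hb h
  · exact (hlt b hb a ha h).symm

end LatentInterval

theorem discretisation_error_bound_general (σ : ℝ → ℝ) (hσ_mono : Monotone σ)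
    (hσ_range : ∀ ξ, σ ξ ∈ Set.Icc (0 : ℝ) 1)
    (M : ℕ) (hM : 0 < M) (c : ℕ → ℝ)
    (hc : StrictMonoOn c (Set.Icc 1 (M - 1)))
    (s : ℕ → ℝ) (hs1 : s 1 = 0)
    (hsl : ∀ l, 2 ≤ l → l ≤ M → s l = σ (c (l - 1)))
    (hband : ∀ l ∈ Finset.Icc 1 M, ∀ ξ ∈ latentInterval M c l,
      s l ≤ σ ξ ∧ σ ξ ≤ s l + 1 / (M : ℝ))
    (μbar vbar : ℝ) (hvbar : 0 < vbar)
    (μl vl : ℕ → ℝ) :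
    |(∫ ξ : ℝ, σ ξ * gaussPDF μbar vbar ξ) -
        ∑ l ∈ Finset.Icc 1 M,
          s l * ∫ ξ in latentInterval M c l, gaussPDF (μl l) (vl l) ξ|
      ≤ 1 / (M : ℝ) +
        ∑ l ∈ Finset.Icc 1 M,
          ∫ ξ in latentInterval M c l, |gaussPDF μbar vbar ξ - gaussPDF (μl l) (vl l) ξ| := by
  have hs : ∀ l ∈ Finset.Icc 1 M, s l ∈ Set.Icc (0 : ℝ) 1 := by
    intro l hl
    obtain ⟨hl1, hlM⟩ := Finset.mem_Icc.1 hl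
    rcases hl1.eq_or_lt with rfl | hl1
    · simp [hs1]
    · exact hsl l hl1 hlM ▸ hσ_range _
  have hσf : Integrable (fun ξ => σ ξ * gaussPDF μbar vbar ξ) :=
    (integrable_gaussPDF μbar vbar).bdd_mul hσ_mono.measurable.aestronglyMeasurable
      (c := 1) (ae_of_all _ fun ξ => abs_le.2 ⟨by linarith [(hσ_range ξ).1], (hσ_range ξ).2⟩)
  calc _ ≤ 1 / (M : ℝ) * (∫ ξ, gaussPDF μbar vbar ξ) + _ :=
        abs_integral_mul_sub_sum_le (fun l _ => measurableSet_latentInterval l)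
          (pairwiseDisjoint_latentInterval hc) (iUnion_latentInterval hM) hσf
          (integrable_gaussPDF μbar vbar) (fun l _ => (integrable_gaussPDF _ _).integrableOn)
          (gaussPDF_nonneg μbar vbar) hband hs
    _ = _ := by rw [integral_gaussPDF μbar hvbar, mul_one]

/-- Key discretisation estimate for the convergence of branch-and-bound: for a
nondecreasing link function `σ : ℝ → [0,1]`, a latent-space discretisation into `M`
intervals on each of which `σ` varies by at most `1/M`, and arbitrary Gaussian
parameters `(μl l, vl l)` for each interval,
`|∫ σ(ξ) N(ξ|μ̄,v̄) dξ − Σ_l s_l ∫_{I_l} N(ξ|μl_l,vl_l) dξ|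
  ≤ 1/M + Σ_l ∫_{I_l} |N(ξ|μ̄,v̄) − N(ξ|μl_l,vl_l)| dξ`. -/
theorem discretisation_error_bound (σ : ℝ → ℝ) (hσ_mono : Monotone σ)
    (hσ_range : ∀ ξ, σ ξ ∈ Set.Icc (0 : ℝ) 1)
    (M : ℕ) (hM : 0 < M) (c : ℕ → ℝ)
    (hc : StrictMonoOn c (Set.Icc 1 (M - 1)))
    (s : ℕ → ℝ) (hs1 : s 1 = 0)
    (hsl : ∀ l, 2 ≤ l → l ≤ M → s l = σ (c (l - 1)))
    (hband : ∀ l ∈ Finset.Icc 1 M, ∀ ξ ∈ latentInterval M c l,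
      s l ≤ σ ξ ∧ σ ξ ≤ s l + 1 / (M : ℝ))
    (μbar vbar : ℝ) (hvbar : 0 < vbar)
    (μl vl : ℕ → ℝ) (hvl : ∀ l, 0 < vl l) :
    |(∫ ξ : ℝ, σ ξ * gaussPDF μbar vbar ξ) -
        ∑ l ∈ Finset.Icc 1 M,
          s l * ∫ ξ in latentInterval M c l, gaussPDF (μl l) (vl l) ξ|
      ≤ 1 / (M : ℝ) +
        ∑ l ∈ Finset.Icc 1 M,
          ∫ ξ in latentInterval M c l, |gaussPDF μbar vbar ξ - gaussPDF (μl l) (vl l) ξ| :=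
  discretisation_error_bound_general σ hσ_mono hσ_range M hM c hc s hs1 hsl hband μbar vbar hvbar μl
    vl
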